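/- Let G be a transient connected locally finite network and suppose A ⊆ V is a set of vertices such that there exist ε > 0 and infinitely many pairwise disjoint subsets A₁, A₂, … ⊆ A with Cap(Aᵢ) ≥ ε for every i ≥ 1. Then Cap(A) = ∞. -/

import Mathlib

open scoped ENNReal
open Filter

noncomputable section

/-- The Dirichlet energy of a function on a network with oriented edge set `E`,
endpoint maps `src`, `tgt` and conductances `c`, valued in `ℝ≥0∞`. -/
def dirichletEnergy (V E : Type*) (src tgt : E → V) (c : E → ℝ) (φ : V → ℝ) : ℝ≥0∞ :=
  (1 / 2) * ∑' e : E, ENNReal.ofReal (c e * (φ (src e) - φ (tgt e)) ^ 2)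

/-- `φ` belongs to `D₀(G)`, the closure of the finitely supported functions in the
Dirichlet norm `‖φ‖² = φ(o)² + 𝓔(φ)` (for a fixed root `o`): there is a sequence of
finitely supported functions converging to `φ` at `o` and in energy. -/
def MemD0 (V E : Type*) (src tgt : E → V) (c : E → ℝ) (o : V) (φ : V → ℝ) : Prop :=
  ∃ φs : ℕ → V → ℝ, (∀ n, (Function.support (φs n)).Finite) ∧
    Tendsto (fun n => φs n o) atTop (nhds (φ o)) ∧
    Tendsto (fun n => dirichletEnergy V E src tgt c (fun v => φs n v - φ v)) atTop (nhds 0)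

/-- The capacity of a vertex set, defined by Dirichlet's variational principle
`Cap(A) = inf{𝓔(φ) : φ ∈ D₀(G), φ ≥ 1 on A}` (with `inf ∅ = ∞`). -/
def cap (V E : Type*) (src tgt : E → V) (c : E → ℝ) (o : V) (A : Set V) : ℝ≥0∞ :=
  sInf {x | ∃ φ : V → ℝ, MemD0 V E src tgt c o φ ∧ (∀ v ∈ A, 1 ≤ φ v) ∧
    x = dirichletEnergy V E src tgt c φ}

/-- Auxiliary: if the summands quadruple termwise, the Dirichlet energy quadruples. -/
lemma dirichletEnergy_eq_four_mul (V E : Type*) (src tgt : E → V) (c : E → ℝ) (χ ψ : V → ℝ)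
    (h : ∀ e, c e * (χ (src e) - χ (tgt e)) ^ 2 = 4 * (c e * (ψ (src e) - ψ (tgt e)) ^ 2)) :
    dirichletEnergy V E src tgt c χ = 4 * dirichletEnergy V E src tgt c ψ := by
  unfold dirichletEnergy
  rw [show (∑' e : E, ENNReal.ofReal (c e * (χ (src e) - χ (tgt e)) ^ 2))
      = ∑' e : E, 4 * ENNReal.ofReal (c e * (ψ (src e) - ψ (tgt e)) ^ 2) from
    tsum_congr fun e => by
      rw [h e, ENNReal.ofReal_mul (by norm_num : (0:ℝ) ≤ 4)]
      norm_num,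
    ENNReal.tsum_mul_left, mul_left_comm]

/-- in a transient network, a vertex set containing infinitely many pairwise
disjoint subsets of capacity at least `ε > 0` has infinite capacity. Transience is
expressed by the positivity of the capacity of (finite) vertex sets. -/
theorem cap_infinite_of_disjoint_subsets (V E : Type*) (src tgt : E → V) (c : E → ℝ)
    (hc : ∀ e, 0 < c e)
    (hlocfin : ∀ v : V, {e : E | src e = v ∨ tgt e = v}.Finite)
    (o : V)
    (htrans : ∀ v : V, 0 < cap V E src tgt c o {v})
    (A : Set V) (As : ℕ → Set V)
    (hsub : ∀ i, As i ⊆ A)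
    (hdisj : Pairwise (Function.onFun Disjoint As))
    (ε : ℝ) (hε : 0 < ε)
    (hcap : ∀ i, ENNReal.ofReal ε ≤ cap V E src tgt c o (As i)) :
    cap V E src tgt c o A = ⊤ := by
  by_contra hne
  -- the admissible set for `A` is nonempty
  have hSne : {x | ∃ φ : V → ℝ, MemD0 V E src tgt c o φ ∧ (∀ v ∈ A, 1 ≤ φ v) ∧
      x = dirichletEnergy V E src tgt c φ}.Nonempty := by
    by_contra h
    exact hne (by rw [cap, Set.not_nonempty_iff_eq_empty.mp h, sInf_empty])
  obtain ⟨x, φ, hφD0, hφA, rfl⟩ := hSne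
  obtain ⟨φs, hfin, htendo, hten⟩ := hφD0
  -- pick `n` with small approximation energy
  have h4 : (0:ℝ≥0∞) < ENNReal.ofReal ε / 4 :=
    ENNReal.div_pos (ENNReal.ofReal_pos.mpr hε).ne' (by norm_num)
  obtain ⟨n, hn⟩ := (hten.eventually_lt_const h4).exists
  set S := Function.support (φs n) with hSdef
  -- only finitely many `As i` meet the (finite) support of `φs n`
  have hI : {i : ℕ | (As i ∩ S).Nonempty}.Finite := by
    apply Set.Finite.subset (Set.Finite.biUnion (hfin n)
      (fun v _ => Set.Subsingleton.finite (fun i (hi : v ∈ As i) j (hj : v ∈ As j) => by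
        by_contra hij
        exact Set.disjoint_left.mp (hdisj hij) hi hj)))
    rintro i ⟨v, hvA, hvS⟩
    exact Set.mem_biUnion hvS hvA
  obtain ⟨i, hi⟩ := hI.infinite_compl.nonempty
  have hzero : ∀ v ∈ As i, φs n v = 0 := by
    intro v hv
    by_contra h0
    exact hi ⟨v, hv, h0⟩
  set g : V → ℝ := fun v => 2 * (φ v - φs n v) with hg
  -- `g` is in `D₀`
  have hgD0 : MemD0 V E src tgt c o g := by
    refine ⟨fun m v => 2 * (φs m v - φs n v), fun m => ?_, ?_, ?_⟩
    · refine Set.Finite.subset ((hfin m).union (hfin n)) ?_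
      intro v hv
      by_contra hv'
      simp only [Set.mem_union, Function.mem_support, not_or, not_not] at hv'
      simp [Function.mem_support, hv'.1, hv'.2] at hv
    · exact (htendo.sub_const (φs n o)).const_mul 2
    · have hkey : ∀ m, dirichletEnergy V E src tgt c
          (fun v => 2 * (φs m v - φs n v) - g v)
          = 4 * dirichletEnergy V E src tgt c (fun v => φs m v - φ v) := by
        intro m
        apply dirichletEnergy_eq_four_mul
        intro e
        simp only [hg]
        ring
      simp only [hkey]
      have := ENNReal.Tendsto.const_mul hten (Or.inr (by norm_num : (4:ℝ≥0∞) ≠ ⊤))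
      simpa using this
  -- `g ≥ 1` on `As i`
  have hgA : ∀ v ∈ As i, 1 ≤ g v := by
    intro v hv
    have h1 := hφA v (hsub i hv)
    simp only [hg, hzero v hv, sub_zero]
    linarith
  have hle : cap V E src tgt c o (As i) ≤ dirichletEnergy V E src tgt c g :=
    sInf_le ⟨g, hgD0, hgA, rfl⟩
  -- energy of `g` equals `4 *` approximation energy
  have hEg : dirichletEnergy V E src tgt c g
      = 4 * dirichletEnergy V E src tgt c (fun v => φs n v - φ v) := by
    apply dirichletEnergy_eq_four_mul
    intro e
    simp only [hg]
    ring
  have hlt : cap V E src tgt c o (As i) < ENNReal.ofReal ε := by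
    calc cap V E src tgt c o (As i) ≤ dirichletEnergy V E src tgt c g := hle
      _ = 4 * dirichletEnergy V E src tgt c (fun v => φs n v - φ v) := hEg
      _ < 4 * (ENNReal.ofReal ε / 4) := by
          exact (ENNReal.mul_lt_mul_iff_right (by norm_num) (by norm_num)).mpr hn
      _ = ENNReal.ofReal ε := ENNReal.mul_div_cancel' (by norm_num) (by norm_num)
  exact absurd (hcap i) (not_le.mpr hlt)
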